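/- Li₂(-1/2) + (1/6)·Li₂(1/9) = -π²/18 + ln(2)·ln(3) - (1/2)·ln²(2) - (1/3)·ln²(3). -/

import Mathlib

open Real MeasureTheory

noncomputable def Li2 (x : ℝ) : ℝ := -∫ t in (0:ℝ)..x, Real.log (1 - t) / t

/-!
Differentiating under the integral sign, `Li2 x + Li2 (-x) - Li2 (x ^ 2) / 2` and Landen's
combination `Li2 x + Li2 (x / (x - 1)) + log (1 - x) ^ 2 / 2` have derivative zero away from the
singular points, so they keep their value `0` at `x = 0`. Integrating the power series of
`-log (1 - t) / t` term by term gives `Li2 1 = ζ(2) = π ^ 2 / 6`; duplication at `1` and Landen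
at `-1` then yield `Li2 (-1)` and `Li2 (1 / 2)`. The identity is a linear combination of Landen at
`-1/2`, `-1/3`, duplication at `1/3`, `1/2`, and the value of `Li2 (1 / 2)`.
-/

open Set intervalIntegral
open scoped Interval

theorem eq_of_hasDerivAt_eq_zero {f : ℝ → ℝ} {a b : ℝ} (hf : ContinuousOn f (uIcc a b))
    (hf' : ∀ x ∈ uIoo a b, HasDerivAt f 0 x) : f a = f b := by
  wlog hab : a < b generalizing a b
  · rcases (not_lt.1 hab).eq_or_lt with rfl | hba
    · rfl
    · exact (this (uIcc_comm a b ▸ hf) (fun x hx => hf' x (uIoo_comm a b ▸ hx)) hba).symm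
  obtain ⟨c, hc, hslope⟩ := exists_hasDerivAt_eq_slope f (fun _ => 0) hab
    (by rwa [uIcc_of_lt hab] at hf) (fun x hx => hf' x (by rwa [uIoo_of_lt hab]))
  rcases div_eq_zero_iff.1 hslope.symm with h | h
  · exact (sub_eq_zero.1 h).symm
  · exact absurd (sub_eq_zero.1 h) hab.ne'

theorem intervalIntegrable_log_one_sub_div (a b : ℝ) :
    IntervalIntegrable (fun t => log (1 - t) / t) volume a b := by
  suffices h : ∀ c, IntervalIntegrable (fun t => log (1 - t) / t) volume (1/2) c from
    (h a).symm.trans (h b)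
  intro c
  rcases lt_or_ge c 1 with hc | hc
  · -- below `1` the integrand agrees off `0` with a continuous difference quotient
    have hcont : ContinuousOn (dslope (fun t => log (1 - t)) 0) (uIcc (1/2) c) := by
      refine ((continuousOn_dslope (Iio_mem_nhds one_pos)).2 ⟨?_, ?_⟩).mono ?_
      · exact ContinuousOn.log (by fun_prop) fun t ht => (sub_pos.2 ht).ne'
      · exact ((differentiableAt_id.const_sub 1).log (by norm_num))
      · exact fun t ht => ht.2.trans_lt (max_lt (by norm_num) hc)
    refine hcont.intervalIntegrable.congr_ae ?_
    filter_upwards [ae_restrict_of_ae (Measure.ae_ne volume 0)] with t ht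
    simp [dslope_of_ne _ ht, slope_def_field, div_eq_inv_mul]
  · have hlog : IntervalIntegrable (fun t => log (1 - t)) volume (1/2) c := by
      convert (intervalIntegrable_log' (a := 1/2) (b := 1 - c)).comp_sub_left 1 using 1 <;> ring
    refine hlog.mul_continuousOn (continuousOn_inv₀.mono ?_)
    exact fun t ht => ((lt_min (by norm_num) (by linarith)).trans_le ht.1).ne'

@[fun_prop]
theorem continuous_Li2 : Continuous Li2 :=
  (continuous_primitive intervalIntegrable_log_one_sub_div 0).neg

theorem hasDerivAt_Li2 {x : ℝ} (h₀ : x ≠ 0) (h₁ : x ≠ 1) :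
    HasDerivAt Li2 (-(log (1 - x) / x)) x := by
  refine (integral_hasDerivAt_right (intervalIntegrable_log_one_sub_div 0 x)
    (by fun_prop : Measurable _).stronglyMeasurable.stronglyMeasurableAtFilter ?_).neg
  exact ((continuousAt_const.sub continuousAt_id).log (sub_ne_zero.2 h₁.symm)).div
    continuousAt_id h₀

@[simp]
theorem Li2_zero : Li2 0 = 0 := by simp [Li2]

theorem hasSum_pow_div_succ_of_abs_lt_one {t : ℝ} (ht : |t| < 1) (h₀ : t ≠ 0) :
    HasSum (fun n : ℕ => t ^ n / (n + 1)) (-(log (1 - t) / t)) := by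
  have h := (hasSum_pow_div_log_of_abs_lt_one ht).div_const t
  rw [neg_div] at h
  refine h.congr_fun fun n => ?_
  rw [pow_succ]
  field_simp

theorem hasSum_Li2 {x : ℝ} (h₀ : 0 ≤ x) (h₁ : x ≤ 1) :
    HasSum (fun n : ℕ => x ^ (n + 1) / (n + 1) ^ 2) (Li2 x) := by
  have hIoc : ∀ t ∈ Ι 0 x, 0 < t ∧ t ≤ 1 := fun t ht => by
    rw [uIoc_of_le h₀] at ht
    exact ⟨ht.1, ht.2.trans h₁⟩
  have hsum : ∀ᵐ t, t ∈ Ι 0 x → HasSum (fun n : ℕ => t ^ n / (n + 1)) (-(log (1 - t) / t)) := by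
    filter_upwards [Measure.ae_ne volume 1] with t ht htx
    obtain ⟨ht₀, ht₁⟩ := hIoc t htx
    exact hasSum_pow_div_succ_of_abs_lt_one (abs_lt.2 ⟨by linarith, lt_of_le_of_ne ht₁ ht⟩)
      ht₀.ne'
  have hint := hasSum_integral_of_dominated_convergence (fun (n : ℕ) (t : ℝ) => t ^ n / (n + 1))
    (fun n => by fun_prop) (fun n => ?_) (hsum.mono fun t h ht => (h ht).summable) ?_ hsum
  · rw [Li2, ← intervalIntegral.integral_neg]
    refine hint.congr_fun fun n => ?_
    rw [intervalIntegral.integral_div, integral_pow]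
    field_simp
    ring
  · refine .of_forall fun t ht => ?_
    rw [norm_of_nonneg (div_nonneg (pow_nonneg (hIoc t ht).1.le n) (by positivity))]
  · refine ((intervalIntegrable_log_one_sub_div 0 x).neg).congr_ae ?_
    filter_upwards [ae_restrict_mem measurableSet_uIoc, ae_restrict_of_ae hsum] with t ht h
    exact (h ht).tsum_eq.symm

theorem Li2_one : Li2 1 = π ^ 2 / 6 := by
  refine (hasSum_Li2 zero_le_one le_rfl).unique ?_
  simpa using (hasSum_nat_add_iff' 1).2 hasSum_zeta_two

theorem Li2_add_Li2_neg {x : ℝ} (hx : |x| ≤ 1) : Li2 x + Li2 (-x) = Li2 (x ^ 2) / 2 := by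
  have hderiv : ∀ y ∈ uIoo 0 x,
      HasDerivAt (fun y => Li2 y + Li2 (-y) - Li2 (y ^ 2) / 2) 0 y := by
    intro y hy
    have h₀ : y ≠ 0 := ne_of_mem_of_not_mem hy left_notMem_uIoo
    have hgt : -1 < y := (le_inf (by norm_num) (neg_le_of_abs_le hx)).trans_lt hy.1
    have hlt : y < 1 := hy.2.trans_le (sup_le zero_le_one (le_of_abs_le hx))
    have hsq : y ^ 2 < 1 := by nlinarith
    have := ((hasDerivAt_Li2 h₀ hlt.ne).add
      ((hasDerivAt_Li2 (neg_ne_zero.2 h₀) (by linarith)).comp y (hasDerivAt_neg y))).sub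
      (((hasDerivAt_Li2 (pow_ne_zero 2 h₀) hsq.ne).comp (h := fun y => y ^ 2) y
        (hasDerivAt_pow 2 y)).div_const 2)
    refine this.congr_deriv ?_
    rw [show 1 - y ^ 2 = (1 - y) * (1 - -y) by ring, log_mul (by linarith) (by linarith)]
    field_simp
    ring
  have hzero : Li2 0 + Li2 (-0) - Li2 (0 ^ 2) / 2 = 0 := by simp
  linear_combination (eq_of_hasDerivAt_eq_zero (by fun_prop) hderiv).symm + hzero

theorem Li2_add_Li2_div_sub_one {x : ℝ} (hx : x < 1) :
    Li2 x + Li2 (x / (x - 1)) = -log (1 - x) ^ 2 / 2 := by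
  have hderiv : ∀ y ∈ uIoo 0 x,
      HasDerivAt (fun y => Li2 y + Li2 (y / (y - 1)) + log (1 - y) ^ 2 / 2) 0 y := by
    intro y hy
    have h₀ : y ≠ 0 := ne_of_mem_of_not_mem hy left_notMem_uIoo
    have h₁ : y < 1 := hy.2.trans_le (sup_le zero_le_one hx.le)
    have hsub : y - 1 ≠ 0 := by linarith
    have hsub' : 1 - y ≠ 0 := by linarith
    have hu : HasDerivAt (fun y => y / (y - 1)) (-1 / (y - 1) ^ 2) y :=
      ((hasDerivAt_id' y).div ((hasDerivAt_id' y).sub_const 1) hsub).congr_deriv (by ring)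
    have := ((hasDerivAt_Li2 h₀ h₁.ne).add ((hasDerivAt_Li2 (div_ne_zero h₀ hsub)
      (by rw [Ne, div_eq_one_iff_eq hsub]; linarith)).comp y hu)).add
      ((((hasDerivAt_id' y).const_sub 1).log hsub').pow 2 |>.div_const 2)
    refine this.congr_deriv ?_
    rw [show 1 - y / (y - 1) = (1 - y)⁻¹ by field_simp; ring, log_inv]
    norm_num
    field_simp
    ring
  have hlt : ∀ y ∈ uIcc 0 x, y < 1 := fun y hy => hy.2.trans_lt (max_lt one_pos hx)
  have hcont : ContinuousOn (fun y => Li2 y + Li2 (y / (y - 1)) + log (1 - y) ^ 2 / 2)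
      (uIcc 0 x) := by
    refine (continuous_Li2.continuousOn.add (continuous_Li2.comp_continuousOn ?_)).add ?_
    · exact continuousOn_id.div (continuousOn_id.sub continuousOn_const)
        fun y hy => sub_ne_zero.2 (hlt y hy).ne
    · exact (((continuousOn_const.sub continuousOn_id).log
        fun y hy => sub_ne_zero.2 (hlt y hy).ne').pow 2).div_const 2
  have hzero : Li2 0 + Li2 (0 / (0 - 1)) + log (1 - 0) ^ 2 / 2 = 0 := by simp
  linear_combination (eq_of_hasDerivAt_eq_zero hcont hderiv).symm + hzero

theorem Li2_neg_one : Li2 (-1) = -π ^ 2 / 12 := by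
  have := Li2_add_Li2_neg (x := 1) (by norm_num)
  norm_num [Li2_one] at this
  linarith

theorem Li2_half : Li2 (1 / 2) = π ^ 2 / 12 - log 2 ^ 2 / 2 := by
  have := Li2_add_Li2_div_sub_one (x := -1) (by norm_num)
  norm_num [Li2_neg_one] at this
  linarith

theorem ramanujan_identity :
    Li2 (-1/2) + (1/6) * Li2 (1/9)
      = -Real.pi ^ 2 / 18 + Real.log 2 * Real.log 3
        - (1/2) * (Real.log 2) ^ 2 - (1/3) * (Real.log 3) ^ 2 := by
  have landen_half := Li2_add_Li2_div_sub_one (x := -1/2) (by norm_num)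
  have landen_third := Li2_add_Li2_div_sub_one (x := -1/3) (by norm_num)
  have dup_third := Li2_add_Li2_neg (x := 1/3) (by norm_num [abs_of_pos])
  have dup_half := Li2_add_Li2_neg (x := 1/2) (by norm_num [abs_of_pos])
  have log_three_halves : log (1 - -1/2) = log 3 - log 2 := by
    rw [show (1 : ℝ) - -1/2 = 3 / 2 by norm_num, log_div (by norm_num) (by norm_num)]
  have log_four_thirds : log (1 - -1/3) = 2 * log 2 - log 3 := by
    rw [show (1 : ℝ) - -1/3 = 2 ^ 2 / 3 by norm_num, log_div (by norm_num) (by norm_num), log_pow]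
    norm_num
  rw [log_three_halves] at landen_half
  rw [log_four_thirds] at landen_third
  norm_num at landen_half landen_third dup_third dup_half ⊢
  linear_combination (1/3 : ℝ) * landen_half + (1/3 : ℝ) * landen_third - (1/3 : ℝ) * dup_third
    + (2/3 : ℝ) * dup_half - (2/3 : ℝ) * Li2_half
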